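/- arXiv:2208.01980 — 11 statements merged into one kernel-verified Lean document; each statement's English description precedes it below -/
import Mathlib

section
/- Let (S, I, B) : [0, t₀] → ℝ be a differentiable solution of the system S' = ω − βSB − γS − μ₁S, I' = βSB − δI − μ₁I, B' = αI − yB − μ₂B with positive parameters and S(0) > 0, I(0) > 0, B(0) > 0. Then S(t) > 0, I(t) > 0, and B(t) > 0 for all t ∈ [0, t₀]. -/
/-!
Let `T` be the first time at which one of `S`, `I`, `B` vanishes. Before `T` all three are
positive, so `I' + (δ + μ₁) I = β S B` and `B' + (y + μ₂) B = α I` have nonnegative right-hand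
sides, and the integrating factors `exp ((δ + μ₁) t)`, `exp ((y + μ₂) t)` keep `I T` and `B T`
positive. Hence `S T = 0` while `S > 0` just before `T`, which forces `S' T ≤ 0`; but the
equation gives `S' T = ω > 0`.
-/

open Set

theorem HasDerivAt.nonpos_of_isMinOn_Ioo {f : ℝ → ℝ} {f' a b : ℝ} (hf : HasDerivAt f f' b)
    (hab : a < b) (hmin : IsMinOn f (Ioo a b) b) : f' ≤ 0 := by
  refine le_of_tendsto (hasDerivAt_iff_tendsto_slope_left_right.1 hf).1 ?_
  filter_upwards [Ioo_mem_nhdsLT hab] with s hs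
  rw [slope_def_field]
  exact div_nonpos_of_nonneg_of_nonpos (sub_nonneg.2 (hmin hs)) (sub_nonpos.2 hs.2.le)

theorem ContinuousOn.exists_first_zero {m : ℝ → ℝ} {a b : ℝ} (hm : ContinuousOn m (Icc a b))
    (ha : 0 < m a) (hneg : ∃ t ∈ Icc a b, m t ≤ 0) :
    ∃ T ∈ Ioc a b, m T = 0 ∧ ∀ s ∈ Ico a T, 0 < m s := by
  set E := Icc a b ∩ m ⁻¹' Iic 0
  have hEclosed : IsClosed E := hm.preimage_isClosed_of_isClosed isClosed_Icc isClosed_Iic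
  have hEbdd : BddBelow E := ⟨a, fun t ht => ht.1.1⟩
  obtain ⟨t, ht, hmt⟩ := hneg
  have hTE : sInf E ∈ E := hEclosed.csInf_mem ⟨t, ht, hmt⟩ hEbdd
  have haT : a ≤ sInf E := hTE.1.1
  have hpos : ∀ s ∈ Ico a (sInf E), 0 < m s := fun s hs => by
    by_contra! hms
    exact (csInf_le hEbdd ⟨⟨hs.1, hs.2.le.trans hTE.1.2⟩, hms⟩).not_gt hs.2
  have haT' : a < sInf E := haT.lt_of_ne fun h => (h ▸ hTE.2 : m a ≤ 0).not_gt ha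
  refine ⟨sInf E, ⟨haT', hTE.1.2⟩, le_antisymm hTE.2 ?_, hpos⟩
  by_contra! hneg
  obtain ⟨s, hs, hms⟩ := intermediate_value_Icc' haT (hm.mono (Icc_subset_Icc le_rfl hTE.1.2))
    ⟨hneg.le, ha.le⟩
  rcases hs.2.lt_or_eq with hsT | rfl
  · exact (hpos s ⟨hs.1, hsT⟩).ne' hms
  · exact hneg.ne hms

theorem pos_of_hasDerivAt_sub_mul {f g : ℝ → ℝ} {a b c : ℝ} (hab : a ≤ b)
    (hf : ∀ t ∈ Icc a b, HasDerivAt f (g t - c * f t) t) (hg : ∀ t ∈ Ioo a b, 0 ≤ g t)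
    (ha : 0 < f a) : 0 < f b := by
  have hφ : ∀ t ∈ Icc a b,
      HasDerivAt (fun s => Real.exp (c * s) * f s) (Real.exp (c * t) * g t) t := fun t ht => by
    have hexp : HasDerivAt (fun s => Real.exp (c * s)) (Real.exp (c * t) * c) t := by
      simpa using ((hasDerivAt_id t).const_mul c).exp
    exact (hexp.mul (hf t ht)).congr_deriv (by ring)
  have hmono : MonotoneOn (fun s => Real.exp (c * s) * f s) (Icc a b) := by
    refine monotoneOn_of_hasDerivWithinAt_nonneg (f' := fun t => Real.exp (c * t) * g t)
      (convex_Icc a b) (fun t ht => (hφ t ht).continuousAt.continuousWithinAt)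
      (fun t ht => ?_) (fun t ht => ?_)
    all_goals rw [interior_Icc] at ht
    · exact (hφ t (Ioo_subset_Icc_self ht)).hasDerivWithinAt
    · exact mul_nonneg (Real.exp_pos _).le (hg t ht)
  have hmono_ab := hmono (left_mem_Icc.2 hab) (right_mem_Icc.2 hab) hab
  exact pos_of_mul_pos_right ((mul_pos (Real.exp_pos _) ha).trans_le hmono_ab) (Real.exp_pos _).le

theorem leprosy_positivity_general
    (ω β γ μ₁ δ α y μ₂ t₀ : ℝ)
    (hω : 0 < ω) (hβ : 0 < β) (hα : 0 < α)
    (S I B : ℝ → ℝ)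
    (hS : ∀ t ∈ Set.Icc (0 : ℝ) t₀,
      HasDerivAt S (ω - β * S t * B t - γ * S t - μ₁ * S t) t)
    (hI : ∀ t ∈ Set.Icc (0 : ℝ) t₀,
      HasDerivAt I (β * S t * B t - δ * I t - μ₁ * I t) t)
    (hB : ∀ t ∈ Set.Icc (0 : ℝ) t₀,
      HasDerivAt B (α * I t - y * B t - μ₂ * B t) t)
    (hS0 : 0 < S 0) (hI0 : 0 < I 0) (hB0 : 0 < B 0) :
    ∀ t ∈ Set.Icc (0 : ℝ) t₀, 0 < S t ∧ 0 < I t ∧ 0 < B t := by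
  set m : ℝ → ℝ := fun t => min (S t) (min (I t) (B t))
  suffices ∀ t ∈ Icc 0 t₀, 0 < m t by simpa only [m, lt_min_iff] using this
  by_contra! hneg
  have hm : ContinuousOn m (Icc 0 t₀) := fun t ht => ContinuousAt.continuousWithinAt <|
    (hS t ht).continuousAt.min ((hI t ht).continuousAt.min (hB t ht).continuousAt)
  obtain ⟨T, hT, hmT, hpos⟩ := hm.exists_first_zero (lt_min hS0 (lt_min hI0 hB0)) hneg
  have hsub : Icc 0 T ⊆ Icc 0 t₀ := Icc_subset_Icc le_rfl hT.2
  have hpos' : ∀ s ∈ Ioo 0 T, 0 < S s ∧ 0 < I s ∧ 0 < B s := fun s hs => by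
    simpa only [m, lt_min_iff] using hpos s (Ioo_subset_Ico_self hs)
  have hIT : 0 < I T := pos_of_hasDerivAt_sub_mul (g := fun t => β * S t * B t) (c := δ + μ₁)
    hT.1.le (fun t ht => (hI t (hsub ht)).congr_deriv (by ring))
    (fun t ht => by obtain ⟨_, _, _⟩ := hpos' t ht; positivity) hI0
  have hBT : 0 < B T := pos_of_hasDerivAt_sub_mul (g := fun t => α * I t) (c := y + μ₂)
    hT.1.le (fun t ht => (hB t (hsub ht)).congr_deriv (by ring))
    (fun t ht => by obtain ⟨_, _, _⟩ := hpos' t ht; positivity) hB0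
  have hST : S T = 0 := by
    rcases min_choice (S T) (min (I T) (B T)) with h | h
    · exact h ▸ hmT
    · exact absurd (h ▸ hmT) (lt_min hIT hBT).ne'
  have hS'T := (hS T (hsub (right_mem_Icc.2 hT.1.le))).nonpos_of_isMinOn_Ioo hT.1
    fun s hs => hST ▸ (hpos' s hs).1.le
  rw [hST] at hS'T
  linarith

/-- Positivity of solutions of the leprosy within-host model on `[0, t₀]`
when the initial data are positive. -/
theorem leprosy_positivity
    (ω β γ μ₁ δ α y μ₂ t₀ : ℝ)
    (hω : 0 < ω) (hβ : 0 < β) (hγ : 0 < γ) (hμ₁ : 0 < μ₁)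
    (hδ : 0 < δ) (hα : 0 < α) (hy : 0 < y) (hμ₂ : 0 < μ₂)
    (S I B : ℝ → ℝ)
    (hS : ∀ t ∈ Set.Icc (0 : ℝ) t₀,
      HasDerivAt S (ω - β * S t * B t - γ * S t - μ₁ * S t) t)
    (hI : ∀ t ∈ Set.Icc (0 : ℝ) t₀,
      HasDerivAt I (β * S t * B t - δ * I t - μ₁ * I t) t)
    (hB : ∀ t ∈ Set.Icc (0 : ℝ) t₀,
      HasDerivAt B (α * I t - y * B t - μ₂ * B t) t)
    (hS0 : 0 < S 0) (hI0 : 0 < I 0) (hB0 : 0 < B 0) :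
    ∀ t ∈ Set.Icc (0 : ℝ) t₀, 0 < S t ∧ 0 < I t ∧ 0 < B t :=
  leprosy_positivity_general ω β γ μ₁ δ α y μ₂ t₀ hω hβ hα S I B hS hI hB hS0 hI0 hB0
end

section
/- Let (S, I, B) : [0, t₀] → ℝ be a differentiable solution of the system S' = ω − βSB − γS − μ₁S, I' = βSB − δI − μ₁I, B' = αI − yB − μ₂B with positive parameters, and suppose S(t) ≥ 0 and B(t) ≥ 0 for all t ∈ [0, t₀]. Then for all t ∈ [0, t₀] one has the exponential lower bounds I(t) ≥ I(0)·e^{−(δ+μ₁)t}, and, if additionally I(t) ≥ 0 on [0, t₀], B(t) ≥ B(0)·e^{−(y+μ₂)t}. -/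
open Real Set

/-- `f · exp (k (t - a))` is monotone, since its derivative is `(f' + k f) · exp (k (t - a)) ≥ 0`. -/
theorem mul_exp_le_of_neg_mul_le_deriv {f f' : ℝ → ℝ} {k a b : ℝ}
    (hf : ∀ t ∈ Icc a b, HasDerivAt f (f' t) t) (hf' : ∀ t ∈ Icc a b, -k * f t ≤ f' t) :
    ∀ t ∈ Icc a b, f a * exp (-k * (t - a)) ≤ f t := by
  set F : ℝ → ℝ := fun t => f t * exp (k * (t - a))
  have hF : ∀ t ∈ Icc a b, HasDerivAt F ((f' t + k * f t) * exp (k * (t - a))) t := by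
    intro t ht
    have hexp : HasDerivAt (fun t => exp (k * (t - a))) (exp (k * (t - a)) * k) t := by
      simpa using (((hasDerivAt_id t).sub_const a).const_mul k).exp
    exact ((hf t ht).mul hexp).congr_deriv (by ring)
  have hmono : MonotoneOn F (Icc a b) := by
    refine monotoneOn_of_hasDerivWithinAt_nonneg (convex_Icc a b)
      (fun t ht => (hF t ht).continuousAt.continuousWithinAt)
      (fun t ht => (hF t (interior_subset ht)).hasDerivWithinAt) fun t ht => ?_
    have ht' := interior_subset ht
    exact mul_nonneg (by linarith [hf' t ht']) (exp_pos _).le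
  intro t ht
  have hFa : f a ≤ f t * exp (k * (t - a)) := by
    simpa [F] using hmono (left_mem_Icc.2 (ht.1.trans ht.2)) ht ht.1
  rwa [neg_mul, exp_neg, ← div_eq_mul_inv, div_le_iff₀ (exp_pos _)]

theorem leprosy_exponential_lower_bounds_general
    (β μ₁ δ α y μ₂ t₀ : ℝ)
    (hβ : 0 < β) (hα : 0 < α)
    (S I B : ℝ → ℝ)
    (hI : ∀ t ∈ Set.Icc (0 : ℝ) t₀,
      HasDerivAt I (β * S t * B t - δ * I t - μ₁ * I t) t)
    (hB : ∀ t ∈ Set.Icc (0 : ℝ) t₀,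
      HasDerivAt B (α * I t - y * B t - μ₂ * B t) t)
    (hSnn : ∀ t ∈ Set.Icc (0 : ℝ) t₀, 0 ≤ S t)
    (hBnn : ∀ t ∈ Set.Icc (0 : ℝ) t₀, 0 ≤ B t) :
    (∀ t ∈ Set.Icc (0 : ℝ) t₀, I 0 * Real.exp (-(δ + μ₁) * t) ≤ I t) ∧
    ((∀ t ∈ Set.Icc (0 : ℝ) t₀, 0 ≤ I t) →
      ∀ t ∈ Set.Icc (0 : ℝ) t₀, B 0 * Real.exp (-(y + μ₂) * t) ≤ B t) := by
  constructor
  · intro t ht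
    simpa using mul_exp_le_of_neg_mul_le_deriv (k := δ + μ₁) hI (fun s hs => by
      linarith [mul_nonneg (mul_nonneg hβ.le (hSnn s hs)) (hBnn s hs)]) t ht
  · intro hInn t ht
    simpa using mul_exp_le_of_neg_mul_le_deriv (k := y + μ₂) hB (fun s hs => by
      linarith [mul_nonneg hα.le (hInn s hs)]) t ht

/-- Exponential lower bounds for `I` and `B` along solutions of the leprosy model:
`I t ≥ I 0 * exp (-(δ+μ₁) t)`, and if moreover `I ≥ 0` on the interval then
`B t ≥ B 0 * exp (-(y+μ₂) t)`. -/
theorem leprosy_exponential_lower_bounds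
    (ω β γ μ₁ δ α y μ₂ t₀ : ℝ)
    (hω : 0 < ω) (hβ : 0 < β) (hγ : 0 < γ) (hμ₁ : 0 < μ₁)
    (hδ : 0 < δ) (hα : 0 < α) (hy : 0 < y) (hμ₂ : 0 < μ₂)
    (S I B : ℝ → ℝ)
    (hS : ∀ t ∈ Set.Icc (0 : ℝ) t₀,
      HasDerivAt S (ω - β * S t * B t - γ * S t - μ₁ * S t) t)
    (hI : ∀ t ∈ Set.Icc (0 : ℝ) t₀,
      HasDerivAt I (β * S t * B t - δ * I t - μ₁ * I t) t)
    (hB : ∀ t ∈ Set.Icc (0 : ℝ) t₀,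
      HasDerivAt B (α * I t - y * B t - μ₂ * B t) t)
    (hSnn : ∀ t ∈ Set.Icc (0 : ℝ) t₀, 0 ≤ S t)
    (hBnn : ∀ t ∈ Set.Icc (0 : ℝ) t₀, 0 ≤ B t) :
    (∀ t ∈ Set.Icc (0 : ℝ) t₀, I 0 * Real.exp (-(δ + μ₁) * t) ≤ I t) ∧
    ((∀ t ∈ Set.Icc (0 : ℝ) t₀, 0 ≤ I t) →
      ∀ t ∈ Set.Icc (0 : ℝ) t₀, B 0 * Real.exp (-(y + μ₂) * t) ≤ B t) :=
  leprosy_exponential_lower_bounds_general β μ₁ δ α y μ₂ t₀ hβ hα S I B hI hB hSnn hBnn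
end

section
/- Let (S, I, B) : [0, ∞) → ℝ be a differentiable solution of the system S' = ω − βSB − γS − μ₁S, I' = βSB − δI − μ₁I, B' = αI − yB − μ₂B with positive parameters, such that S(t) ≥ 0, I(t) ≥ 0, B(t) ≥ 0 for all t ≥ 0. Set k = min{γ + μ₁, δ + μ₁}. Then for all t ≥ 0, S(t) + I(t) ≤ ω/k + (S(0) + I(0) − ω/k)·e^{−kt}. -/
/-! Adding the first two equations cancels the infection term: `(S + I)' = ω - (γ + μ₁) S - (δ + μ₁) I`,
which for nonnegative `S, I` is at most `ω - k (S + I)`. Grönwall's inequality for this linear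
differential inequality gives the bound. -/

open Set Real

theorem le_of_hasDerivAt_le_const_sub_mul {f f' : ℝ → ℝ} {c k : ℝ} (hk : k ≠ 0)
    (hf : ∀ t ∈ Ici (0 : ℝ), HasDerivAt f (f' t) t)
    (bound : ∀ t ∈ Ici (0 : ℝ), f' t ≤ c - k * f t) :
    ∀ t ∈ Ici (0 : ℝ), f t ≤ c / k + (f 0 - c / k) * exp (-k * t) := by
  intro t ht
  have hgron := le_gronwallBound_of_liminf_deriv_right_le (f := f) (f' := f') (δ := f 0)
    (K := -k) (ε := c) (a := 0) (b := t)
    (fun x hx => (hf x hx.1).continuousAt.continuousWithinAt)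
    (fun x hx _ hr => (hf x hx.1).hasDerivWithinAt.liminf_right_slope_le hr) le_rfl
    (fun x hx => (bound x hx.1).trans_eq (by ring)) t ⟨ht, le_rfl⟩
  rw [gronwallBound_of_K_ne_0 (neg_ne_zero.2 hk), sub_zero] at hgron
  convert hgron using 1
  field_simp
  ring

theorem leprosy_S_plus_I_bound_general
    (ω β γ μ₁ δ : ℝ)
    (hγ : 0 < γ) (hμ₁ : 0 < μ₁)
    (hδ : 0 < δ)
    (S I B : ℝ → ℝ)
    (hS : ∀ t ∈ Set.Ici (0 : ℝ),
      HasDerivAt S (ω - β * S t * B t - γ * S t - μ₁ * S t) t)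
    (hI : ∀ t ∈ Set.Ici (0 : ℝ),
      HasDerivAt I (β * S t * B t - δ * I t - μ₁ * I t) t)
    (hSnn : ∀ t ∈ Set.Ici (0 : ℝ), 0 ≤ S t)
    (hInn : ∀ t ∈ Set.Ici (0 : ℝ), 0 ≤ I t)
    (k : ℝ) (hk : k = min (γ + μ₁) (δ + μ₁)) :
    ∀ t ∈ Set.Ici (0 : ℝ),
      S t + I t ≤ ω / k + (S 0 + I 0 - ω / k) * Real.exp (-k * t) := by
  have hk_pos : 0 < k := hk ▸ lt_min (by linarith) (by linarith)
  have hkγ : k ≤ γ + μ₁ := hk ▸ min_le_left _ _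
  have hkδ : k ≤ δ + μ₁ := hk ▸ min_le_right _ _
  refine le_of_hasDerivAt_le_const_sub_mul (f := S + I) hk_pos.ne'
    (fun t ht => (hS t ht).add (hI t ht)) fun t ht => ?_
  simp only [Pi.add_apply]
  linarith [mul_nonneg (sub_nonneg.2 hkγ) (hSnn t ht), mul_nonneg (sub_nonneg.2 hkδ) (hInn t ht)]

/-- Boundedness estimate for `S + I`:
`S t + I t ≤ ω/k + (S 0 + I 0 - ω/k) * exp (-k t)` with `k = min (γ+μ₁) (δ+μ₁)`. -/
theorem leprosy_S_plus_I_bound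
    (ω β γ μ₁ δ α y μ₂ : ℝ)
    (hω : 0 < ω) (hβ : 0 < β) (hγ : 0 < γ) (hμ₁ : 0 < μ₁)
    (hδ : 0 < δ) (hα : 0 < α) (hy : 0 < y) (hμ₂ : 0 < μ₂)
    (S I B : ℝ → ℝ)
    (hS : ∀ t ∈ Set.Ici (0 : ℝ),
      HasDerivAt S (ω - β * S t * B t - γ * S t - μ₁ * S t) t)
    (hI : ∀ t ∈ Set.Ici (0 : ℝ),
      HasDerivAt I (β * S t * B t - δ * I t - μ₁ * I t) t)
    (hB : ∀ t ∈ Set.Ici (0 : ℝ),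
      HasDerivAt B (α * I t - y * B t - μ₂ * B t) t)
    (hSnn : ∀ t ∈ Set.Ici (0 : ℝ), 0 ≤ S t)
    (hInn : ∀ t ∈ Set.Ici (0 : ℝ), 0 ≤ I t)
    (hBnn : ∀ t ∈ Set.Ici (0 : ℝ), 0 ≤ B t)
    (k : ℝ) (hk : k = min (γ + μ₁) (δ + μ₁)) :
    ∀ t ∈ Set.Ici (0 : ℝ),
      S t + I t ≤ ω / k + (S 0 + I 0 - ω / k) * Real.exp (-k * t) :=
  leprosy_S_plus_I_bound_general ω β γ μ₁ δ hγ hμ₁ hδ S I B hS hI hSnn hInn k hk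
end

section
/- Let (S, I, B) : [0, ∞) → ℝ be a differentiable solution of the system S' = ω − βSB − γS − μ₁S, I' = βSB − δI − μ₁I, B' = αI − yB − μ₂B with positive parameters, such that S(t) ≥ 0, I(t) ≥ 0, B(t) ≥ 0 for all t ≥ 0, and set k = min{γ + μ₁, δ + μ₁}. Then limsup_{t→∞} (S(t) + I(t)) ≤ ω/k; in particular S and I are bounded on [0, ∞). -/
/-!
Summing the first two equations, the infection term `β S B` cancels, so `N = S + I` satisfies
`N' = ω - (γ + μ₁) S - (δ + μ₁) I ≤ ω - k N` because `S, I ≥ 0`. Grönwall's inequality with rate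
`-k` gives `N t ≤ ω/k + (N 0 - ω/k) e^{-kt}`, which tends to `ω/k` and never exceeds
`max (N 0) (ω/k)`.
-/

open Real Set Filter Topology

theorem le_gronwallBound_of_hasDerivAt_le {f f' : ℝ → ℝ} {K ε a : ℝ}
    (hf : ∀ t ∈ Ici a, HasDerivAt f (f' t) t) (bound : ∀ t ∈ Ici a, f' t ≤ K * f t + ε) :
    ∀ t ∈ Ici a, f t ≤ gronwallBound (f a) K ε (t - a) := fun t ht =>
  le_gronwallBound_of_liminf_deriv_right_le (b := t)
    (fun s hs => (hf s hs.1).continuousAt.continuousWithinAt)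
    (fun s hs _ hr => by
      simpa [slope_def_field, div_eq_inv_mul] using
        (hf s hs.1).hasDerivWithinAt.liminf_right_slope_le hr)
    le_rfl (fun s hs => bound s hs.1) t ⟨ht, le_rfl⟩

theorem gronwallBound_neg_eq {δ k ε : ℝ} (hk : k ≠ 0) (x : ℝ) :
    gronwallBound δ (-k) ε x = ε / k + (δ - ε / k) * exp (-k * x) := by
  rw [gronwallBound_of_K_ne_0 (neg_ne_zero.mpr hk)]
  simp only [div_neg]
  ring

theorem add_mul_exp_neg_le_max {c x k t : ℝ} (hk : 0 ≤ k) (ht : 0 ≤ t) :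
    c + (x - c) * exp (-k * t) ≤ max x c := by
  have h0 := exp_pos (-k * t)
  have h1 : exp (-k * t) ≤ 1 := exp_le_one_iff.mpr (by nlinarith)
  have := le_max_left x c
  have := le_max_right x c
  nlinarith

theorem tendsto_add_mul_exp_neg_atTop {c x k : ℝ} (hk : 0 < k) :
    Tendsto (fun t => c + (x - c) * exp (-k * t)) atTop (𝓝 c) := by
  have hexp : Tendsto (fun t => exp (-k * t)) atTop (𝓝 0) :=
    tendsto_exp_atBot.comp (tendsto_id.const_mul_atTop_of_neg (neg_neg_of_pos hk))
  simpa using (hexp.const_mul (x - c)).const_add c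

theorem limsup_le_of_eventually_le_of_tendsto {α : Type*} {l : Filter α} [l.NeBot]
    {f g : α → ℝ} {c : ℝ}
    (hf : IsBoundedUnder (· ≥ ·) l f) (hfg : f ≤ᶠ[l] g) (hg : Tendsto g l (𝓝 c)) :
    limsup f l ≤ c :=
  (limsup_le_limsup hfg hf.isCoboundedUnder_le hg.isBoundedUnder_le).trans hg.limsup_eq.le

theorem leprosy_S_plus_I_limsup_general
    (ω β γ μ₁ δ : ℝ)
    (hγ : 0 < γ) (hμ₁ : 0 < μ₁)
    (hδ : 0 < δ)
    (S I B : ℝ → ℝ)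
    (hS : ∀ t ∈ Set.Ici (0 : ℝ),
      HasDerivAt S (ω - β * S t * B t - γ * S t - μ₁ * S t) t)
    (hI : ∀ t ∈ Set.Ici (0 : ℝ),
      HasDerivAt I (β * S t * B t - δ * I t - μ₁ * I t) t)
    (hSnn : ∀ t ∈ Set.Ici (0 : ℝ), 0 ≤ S t)
    (hInn : ∀ t ∈ Set.Ici (0 : ℝ), 0 ≤ I t)
    (k : ℝ) (hk : k = min (γ + μ₁) (δ + μ₁)) :
    Filter.limsup (fun t => S t + I t) Filter.atTop ≤ ω / k ∧
    (∃ M : ℝ, ∀ t ∈ Set.Ici (0 : ℝ), |S t| ≤ M ∧ |I t| ≤ M) := by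
  have hk0 : 0 < k := hk ▸ lt_min (by linarith) (by linarith)
  have hbound : ∀ t ∈ Ici (0 : ℝ), S t + I t ≤ ω / k + (S 0 + I 0 - ω / k) * exp (-k * t) := by
    intro t ht
    have hgronwall := le_gronwallBound_of_hasDerivAt_le (f := fun t => S t + I t) (K := -k) (ε := ω)
      (fun s hs => (hS s hs).add (hI s hs)) (fun s hs => by
        have := hSnn s hs; have := hInn s hs
        have : k ≤ γ + μ₁ := hk ▸ min_le_left _ _
        have : k ≤ δ + μ₁ := hk ▸ min_le_right _ _
        nlinarith) t ht
    simpa [gronwallBound_neg_eq hk0.ne'] using hgronwall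
  refine ⟨limsup_le_of_eventually_le_of_tendsto ?_ ?_
    (tendsto_add_mul_exp_neg_atTop (x := S 0 + I 0) hk0), max (S 0 + I 0) (ω / k), fun t ht => ?_⟩
  · exact ⟨0, eventually_map.mpr <| (eventually_ge_atTop 0).mono fun t ht =>
      add_nonneg (hSnn t ht) (hInn t ht)⟩
  · exact (eventually_ge_atTop 0).mono hbound
  · have hsum := (hbound t ht).trans (add_mul_exp_neg_le_max hk0.le ht)
    rw [abs_of_nonneg (hSnn t ht), abs_of_nonneg (hInn t ht)]
    constructor <;> linarith [hSnn t ht, hInn t ht]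

/-- `limsup (S + I) ≤ ω/k` as `t → ∞`, with `k = min (γ+μ₁) (δ+μ₁)`; in particular
`S` and `I` are bounded on `[0, ∞)`. -/
theorem leprosy_S_plus_I_limsup
    (ω β γ μ₁ δ α y μ₂ : ℝ)
    (hω : 0 < ω) (hβ : 0 < β) (hγ : 0 < γ) (hμ₁ : 0 < μ₁)
    (hδ : 0 < δ) (hα : 0 < α) (hy : 0 < y) (hμ₂ : 0 < μ₂)
    (S I B : ℝ → ℝ)
    (hS : ∀ t ∈ Set.Ici (0 : ℝ),
      HasDerivAt S (ω - β * S t * B t - γ * S t - μ₁ * S t) t)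
    (hI : ∀ t ∈ Set.Ici (0 : ℝ),
      HasDerivAt I (β * S t * B t - δ * I t - μ₁ * I t) t)
    (hB : ∀ t ∈ Set.Ici (0 : ℝ),
      HasDerivAt B (α * I t - y * B t - μ₂ * B t) t)
    (hSnn : ∀ t ∈ Set.Ici (0 : ℝ), 0 ≤ S t)
    (hInn : ∀ t ∈ Set.Ici (0 : ℝ), 0 ≤ I t)
    (hBnn : ∀ t ∈ Set.Ici (0 : ℝ), 0 ≤ B t)
    (k : ℝ) (hk : k = min (γ + μ₁) (δ + μ₁)) :
    Filter.limsup (fun t => S t + I t) Filter.atTop ≤ ω / k ∧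
    (∃ M : ℝ, ∀ t ∈ Set.Ici (0 : ℝ), |S t| ≤ M ∧ |I t| ≤ M) :=
  leprosy_S_plus_I_limsup_general ω β γ μ₁ δ hγ hμ₁ hδ S I B hS hI hSnn hInn k hk
end

section
/- With positive parameters ω, β, γ, μ₁, δ, α, y, μ₂ and R₀ = αβω/((γ+μ₁)(δ+μ₁)(y+μ₂)), define S* = (δ+μ₁)(y+μ₂)/(αβ), I* = (γ+μ₁)(y+μ₂)(R₀ − 1)/(αβ), B* = (γ+μ₁)(R₀ − 1)/β. Then (S*, I*, B*) is an equilibrium of the system: substituting these values into the right-hand sides ω − βSB − γS − μ₁S, βSB − δI − μ₁I, and αI − yB − μ₂B gives zero in each component. Moreover S* > 0 always, and I* > 0 and B* > 0 if and only if R₀ > 1. -/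
/-! Writing `a = γ + μ₁`, `d = δ + μ₁`, `c = y + μ₂` for the total removal rates, the system becomes
`S' = ω - βSB - aS`, `I' = βSB - dI`, `B' = αI - cB`. At an infected equilibrium `B = αI/c` and
`βSB = dI` force `S = dc/(αβ)`, and then `ω = aS + βSB` gives `B = a(R₀ - 1)/β`; both `I*` and `B*`
are positive multiples of `R₀ - 1`. -/

theorem sib_infected_equilibrium {K : Type*} [Field K] (ω β α a d c R : K)
    (hβ : β ≠ 0) (hα : α ≠ 0) (ha : a ≠ 0) (hd : d ≠ 0) (hc : c ≠ 0)
    (hR : R = α * β * ω / (a * d * c)) :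
    let S := d * c / (α * β)
    let I := a * c * (R - 1) / (α * β)
    let B := a * (R - 1) / β
    ω - β * S * B - a * S = 0 ∧ β * S * B - d * I = 0 ∧ α * I - c * B = 0 := by
  subst hR
  refine ⟨?_, ?_, ?_⟩ <;> field_simp <;> ring

theorem leprosy_infected_equilibrium_general
    (ω β γ μ₁ δ α y μ₂ : ℝ)
    (hβ : 0 < β) (hγ : 0 < γ) (hμ₁ : 0 < μ₁)
    (hδ : 0 < δ) (hα : 0 < α) (hy : 0 < y) (hμ₂ : 0 < μ₂)
    (R₀ : ℝ) (hR₀ : R₀ = α * β * ω / ((γ + μ₁) * (δ + μ₁) * (y + μ₂)))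
    (Sstar Istar Bstar : ℝ)
    (hSstar : Sstar = (δ + μ₁) * (y + μ₂) / (α * β))
    (hIstar : Istar = (γ + μ₁) * (y + μ₂) * (R₀ - 1) / (α * β))
    (hBstar : Bstar = (γ + μ₁) * (R₀ - 1) / β) :
    (ω - β * Sstar * Bstar - γ * Sstar - μ₁ * Sstar = 0 ∧
     β * Sstar * Bstar - δ * Istar - μ₁ * Istar = 0 ∧
     α * Istar - y * Bstar - μ₂ * Bstar = 0) ∧
    0 < Sstar ∧
    ((0 < Istar ∧ 0 < Bstar) ↔ 1 < R₀) := by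
  have ha : 0 < γ + μ₁ := by positivity
  have hd : 0 < δ + μ₁ := by positivity
  have hc : 0 < y + μ₂ := by positivity
  have hαβ : 0 < α * β := by positivity
  obtain ⟨hS', hI', hB'⟩ := sib_infected_equilibrium ω β α (γ + μ₁) (δ + μ₁) (y + μ₂) R₀
    hβ.ne' hα.ne' ha.ne' hd.ne' hc.ne' hR₀
  subst hSstar hIstar hBstar
  refine ⟨⟨by linear_combination hS', by linear_combination hI', by linear_combination hB'⟩,
    by positivity, ?_⟩
  rw [div_pos_iff_of_pos_right hαβ, mul_pos_iff_of_pos_left (mul_pos ha hc),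
    div_pos_iff_of_pos_right hβ, mul_pos_iff_of_pos_left ha, sub_pos, and_self]

/-- The infected point `E* = (S*, I*, B*)` is an equilibrium of the leprosy model;
`S* > 0` always, and `I* > 0 ∧ B* > 0 ↔ R₀ > 1`. -/
theorem leprosy_infected_equilibrium
    (ω β γ μ₁ δ α y μ₂ : ℝ)
    (hω : 0 < ω) (hβ : 0 < β) (hγ : 0 < γ) (hμ₁ : 0 < μ₁)
    (hδ : 0 < δ) (hα : 0 < α) (hy : 0 < y) (hμ₂ : 0 < μ₂)
    (R₀ : ℝ) (hR₀ : R₀ = α * β * ω / ((γ + μ₁) * (δ + μ₁) * (y + μ₂)))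
    (Sstar Istar Bstar : ℝ)
    (hSstar : Sstar = (δ + μ₁) * (y + μ₂) / (α * β))
    (hIstar : Istar = (γ + μ₁) * (y + μ₂) * (R₀ - 1) / (α * β))
    (hBstar : Bstar = (γ + μ₁) * (R₀ - 1) / β) :
    (ω - β * Sstar * Bstar - γ * Sstar - μ₁ * Sstar = 0 ∧
     β * Sstar * Bstar - δ * Istar - μ₁ * Istar = 0 ∧
     α * Istar - y * Bstar - μ₂ * Bstar = 0) ∧
    0 < Sstar ∧
    ((0 < Istar ∧ 0 < Bstar) ↔ 1 < R₀) :=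
  leprosy_infected_equilibrium_general ω β γ μ₁ δ α y μ₂ hβ hγ hμ₁ hδ hα hy hμ₂ R₀ hR₀ Sstar Istar
    Bstar hSstar hIstar hBstar
end

section
/- With positive parameters ω, β, γ, μ₁, δ, α, y, μ₂ and R₀ = αβω/((γ+μ₁)(δ+μ₁)(y+μ₂)), every equilibrium (S, I, B) ∈ ℝ³ of the system (i.e. every point where all three right-hand sides vanish) with B ≠ 0 equals the infected equilibrium E* = ((δ+μ₁)(y+μ₂)/(αβ), (γ+μ₁)(y+μ₂)(R₀−1)/(αβ), (γ+μ₁)(R₀−1)/β), and every equilibrium with B = 0 equals the disease-free equilibrium E₀ = (ω/(γ+μ₁), 0, 0). Hence the system has exactly these two equilibria (which coincide when R₀ = 1). -/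
/-!
The third equation gives `I = (y + μ₂) B / α`. If `B ≠ 0`, feeding the second equation into the
third and cancelling `B` pins `S` to `S* = (δ + μ₁)(y + μ₂)/(αβ)`; since `ω = S* (γ + μ₁) R₀`, the
first equation `ω = S (βB + γ + μ₁)` then forces `βB = (γ + μ₁)(R₀ - 1)`. If `B = 0`, the first
equation alone gives `S = ω/(γ + μ₁)`.
-/

namespace LeprosyModel

variable {ω β γ μ₁ δ α y μ₂ R₀ S I B : ℝ}

theorem I_eq_of_bacteria_balance (hα : α ≠ 0) (h : α * I - y * B - μ₂ * B = 0) :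
    I = (y + μ₂) * B / α := by
  rw [eq_div_iff hα]
  linear_combination h

theorem S_eq_of_infected_balance (hα : α ≠ 0) (hβ : β ≠ 0) (hB : B ≠ 0)
    (hinf : β * S * B - δ * I - μ₁ * I = 0) (hbac : α * I - y * B - μ₂ * B = 0) :
    S = (δ + μ₁) * (y + μ₂) / (α * β) := by
  rw [eq_div_iff (mul_ne_zero hα hβ)]
  apply mul_right_cancel₀ hB
  linear_combination α * hinf + (δ + μ₁) * hbac

theorem threshold_mul_reproductionNumber (hα : α ≠ 0) (hβ : β ≠ 0) (hγμ : γ + μ₁ ≠ 0)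
    (hδμ : δ + μ₁ ≠ 0) (hyμ : y + μ₂ ≠ 0)
    (hR₀ : R₀ = α * β * ω / ((γ + μ₁) * (δ + μ₁) * (y + μ₂))) :
    (δ + μ₁) * (y + μ₂) / (α * β) * ((γ + μ₁) * R₀) = ω := by
  subst hR₀
  field_simp

theorem B_eq_of_susceptible_balance (hβ : β ≠ 0) (hS : S ≠ 0) (hω : S * ((γ + μ₁) * R₀) = ω)
    (hsus : ω - β * S * B - γ * S - μ₁ * S = 0) : B = (γ + μ₁) * (R₀ - 1) / β := by
  rw [eq_div_iff hβ]
  apply mul_left_cancel₀ hS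
  linear_combination -hsus - hω

theorem S_eq_of_susceptible_balance_of_B_eq_zero (hγμ : γ + μ₁ ≠ 0) (hB : B = 0)
    (hsus : ω - β * S * B - γ * S - μ₁ * S = 0) : S = ω / (γ + μ₁) := by
  subst hB
  rw [eq_div_iff hγμ]
  linear_combination -hsus

end LeprosyModel

theorem leprosy_equilibria_classification_general
    (ω β γ μ₁ δ α y μ₂ : ℝ)
    (hβ : 0 < β) (hγ : 0 < γ) (hμ₁ : 0 < μ₁)
    (hδ : 0 < δ) (hα : 0 < α) (hy : 0 < y) (hμ₂ : 0 < μ₂)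
    (R₀ : ℝ) (hR₀ : R₀ = α * β * ω / ((γ + μ₁) * (δ + μ₁) * (y + μ₂))) :
    ∀ S I B : ℝ,
      (ω - β * S * B - γ * S - μ₁ * S = 0 ∧
       β * S * B - δ * I - μ₁ * I = 0 ∧
       α * I - y * B - μ₂ * B = 0) →
      (B ≠ 0 →
        (S, I, B) = ((δ + μ₁) * (y + μ₂) / (α * β),
                     (γ + μ₁) * (y + μ₂) * (R₀ - 1) / (α * β),
                     (γ + μ₁) * (R₀ - 1) / β)) ∧
      (B = 0 → (S, I, B) = (ω / (γ + μ₁), 0, 0)) := by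
  intro S I B ⟨hsus, hinf, hbac⟩
  have hγμ : γ + μ₁ ≠ 0 := by positivity
  have hI := LeprosyModel.I_eq_of_bacteria_balance hα.ne' hbac
  refine ⟨fun hB => ?_, fun hB => ?_⟩
  · have hS := LeprosyModel.S_eq_of_infected_balance hα.ne' hβ.ne' hB hinf hbac
    have hω := LeprosyModel.threshold_mul_reproductionNumber (ω := ω) hα.ne' hβ.ne' hγμ
      (by positivity) (by positivity) hR₀
    have hBval := LeprosyModel.B_eq_of_susceptible_balance hβ.ne' (by rw [hS]; positivity)
      (hS ▸ hω) hsus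
    rw [hI, hS, hBval]
    congr 2
    field_simp
  · rw [hI, hB, LeprosyModel.S_eq_of_susceptible_balance_of_B_eq_zero hγμ hB hsus]
    simp

/-- Classification of equilibria of the leprosy model: any equilibrium with
`B ≠ 0` equals the infected equilibrium `E*`, and any equilibrium with `B = 0`
equals the disease-free equilibrium `E₀`. -/
theorem leprosy_equilibria_classification
    (ω β γ μ₁ δ α y μ₂ : ℝ)
    (hω : 0 < ω) (hβ : 0 < β) (hγ : 0 < γ) (hμ₁ : 0 < μ₁)
    (hδ : 0 < δ) (hα : 0 < α) (hy : 0 < y) (hμ₂ : 0 < μ₂)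
    (R₀ : ℝ) (hR₀ : R₀ = α * β * ω / ((γ + μ₁) * (δ + μ₁) * (y + μ₂))) :
    ∀ S I B : ℝ,
      (ω - β * S * B - γ * S - μ₁ * S = 0 ∧
       β * S * B - δ * I - μ₁ * I = 0 ∧
       α * I - y * B - μ₂ * B = 0) →
      (B ≠ 0 →
        (S, I, B) = ((δ + μ₁) * (y + μ₂) / (α * β),
                     (γ + μ₁) * (y + μ₂) * (R₀ - 1) / (α * β),
                     (γ + μ₁) * (R₀ - 1) / β)) ∧
      (B = 0 → (S, I, B) = (ω / (γ + μ₁), 0, 0)) :=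
  leprosy_equilibria_classification_general ω β γ μ₁ δ α y μ₂ hβ hγ hμ₁ hδ hα hy hμ₂ R₀ hR₀
end

section
/- Let J₀ be the 3×3 real matrix with rows (−(γ+μ₁), 0, −βω/(γ+μ₁)), (0, −(δ+μ₁), βω/(γ+μ₁)), (0, α, −(y+μ₂)), where all parameters are positive. Then the characteristic polynomial of J₀ (in the variable λ) equals (−(γ+μ₁) − λ)·(λ² + ((δ+μ₁) + (y+μ₂))λ + (δ+μ₁)(y+μ₂)(1 − R₀)), where R₀ = αβω/((γ+μ₁)(δ+μ₁)(y+μ₂)). -/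
/-!
The first column of `J₀ - λ • 1` is `(-(γ + μ₁) - λ, 0, 0)`, so expanding the determinant along it
leaves `-(γ + μ₁) - λ` times the characteristic polynomial of the `(I, B)` block, whose constant
term `(δ + μ₁)(y + μ₂) - αβω/(γ + μ₁)` is `(δ + μ₁)(y + μ₂)(1 - R₀)`.
-/

namespace Matrix

variable {R : Type*} [CommRing R]

theorem of_fin_three_sub_smul_one (a b c d e f g h i t : R) :
    !![a, b, c; d, e, f; g, h, i] - t • (1 : Matrix (Fin 3) (Fin 3) R) =
      !![a - t, b, c; d, e - t, f; g, h, i - t] := by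
  ext j k
  fin_cases j <;> fin_cases k <;> simp

theorem det_fin_three_of_col_zero_eq_zero (a b c e f h i : R) :
    !![a, b, c; 0, e, f; 0, h, i].det = a * (e * i - f * h) := by
  simp only [det_fin_three, of_apply, cons_val', cons_val_zero, cons_val_fin_one, cons_val_one,
    cons_val, mul_zero, zero_mul, sub_zero, add_zero]
  ring

end Matrix

theorem mul_mul_one_sub_div_mul_mul {K : Type*} [Field K] {d e : K} (hd : d ≠ 0) (he : e ≠ 0)
    (a c : K) : d * e * (1 - a / (c * d * e)) = d * e - a / c := by
  field_simp

theorem leprosy_charpoly_at_E0_general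
    (ω β γ μ₁ δ α y μ₂ : ℝ)
    (hμ₁ : 0 < μ₁)
    (hδ : 0 < δ) (hy : 0 < y) (hμ₂ : 0 < μ₂)
    (R₀ : ℝ) (hR₀ : R₀ = α * β * ω / ((γ + μ₁) * (δ + μ₁) * (y + μ₂)))
    (J₀ : Matrix (Fin 3) (Fin 3) ℝ)
    (hJ₀ : J₀ = !![-(γ + μ₁), 0, -(β * ω) / (γ + μ₁);
                   0, -(δ + μ₁), β * ω / (γ + μ₁);
                   0, α, -(y + μ₂)]) :
    ∀ lam : ℝ,
      (J₀ - lam • (1 : Matrix (Fin 3) (Fin 3) ℝ)).det =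
        (-(γ + μ₁) - lam) *
          (lam ^ 2 + ((δ + μ₁) + (y + μ₂)) * lam +
            (δ + μ₁) * (y + μ₂) * (1 - R₀)) := by
  intro lam
  have hconst : (δ + μ₁) * (y + μ₂) * (1 - R₀) = (δ + μ₁) * (y + μ₂) - α * β * ω / (γ + μ₁) := by
    rw [hR₀, mul_mul_one_sub_div_mul_mul (by positivity) (by positivity)]
  rw [hJ₀, Matrix.of_fin_three_sub_smul_one,
    Matrix.det_fin_three_of_col_zero_eq_zero, hconst]
  ring

/-- The characteristic polynomial of the Jacobian `J₀` of the leprosy model at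
the disease-free equilibrium factors as
`(-(γ+μ₁) - λ) * (λ² + ((δ+μ₁)+(y+μ₂)) λ + (δ+μ₁)(y+μ₂)(1 - R₀))`. -/
theorem leprosy_charpoly_at_E0
    (ω β γ μ₁ δ α y μ₂ : ℝ)
    (hω : 0 < ω) (hβ : 0 < β) (hγ : 0 < γ) (hμ₁ : 0 < μ₁)
    (hδ : 0 < δ) (hα : 0 < α) (hy : 0 < y) (hμ₂ : 0 < μ₂)
    (R₀ : ℝ) (hR₀ : R₀ = α * β * ω / ((γ + μ₁) * (δ + μ₁) * (y + μ₂)))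
    (J₀ : Matrix (Fin 3) (Fin 3) ℝ)
    (hJ₀ : J₀ = !![-(γ + μ₁), 0, -(β * ω) / (γ + μ₁);
                   0, -(δ + μ₁), β * ω / (γ + μ₁);
                   0, α, -(y + μ₂)]) :
    ∀ lam : ℝ,
      (J₀ - lam • (1 : Matrix (Fin 3) (Fin 3) ℝ)).det =
        (-(γ + μ₁) - lam) *
          (lam ^ 2 + ((δ + μ₁) + (y + μ₂)) * lam +
            (δ + μ₁) * (y + μ₂) * (1 - R₀)) :=
  leprosy_charpoly_at_E0_general ω β γ μ₁ δ α y μ₂ hμ₁ hδ hy hμ₂ R₀ hR₀ J₀ hJ₀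
end

section
/- With positive parameters ω, β, γ, μ₁, δ, α, y, μ₂ and R₀ = αβω/((γ+μ₁)(δ+μ₁)(y+μ₂)): if R₀ < 1 then every complex eigenvalue of the Jacobian J₀ at the disease-free equilibrium (the matrix with rows (−(γ+μ₁), 0, −βω/(γ+μ₁)), (0, −(δ+μ₁), βω/(γ+μ₁)), (0, α, −(y+μ₂))) has negative real part, and if R₀ > 1 then J₀ has a positive real eigenvalue. In particular the disease-free equilibrium is linearly asymptotically stable for R₀ < 1 and linearly unstable for R₀ > 1. -/
/-!
The characteristic polynomial of `J₀` factors as `(z + γ + μ₁) · q(z)` with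
`q(z) = z² + (δ + μ₁ + y + μ₂) z + (δ + μ₁)(y + μ₂)(1 - R₀)`, since `S` does not feed back
into `I` and `B`.
The root `-(γ + μ₁)` is negative, and the quadratic `q` has positive linear coefficient, so
the sign of its constant term, that is of `1 - R₀`, decides stability: for a positive constant
term both roots lie in the open left half-plane, for a negative one `q` has a positive real root.
-/

open Complex

theorem mem_spectrum_map_ofReal_iff (a b c d e f g : ℝ) (z : ℂ) :
    z ∈ spectrum ℂ ((!![a, b, c; 0, d, e; 0, f, g] : Matrix (Fin 3) (Fin 3) ℝ).map ofReal) ↔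
      z = a ∨ (z - d) * (z - g) - e * f = 0 := by
  rw [Matrix.mem_spectrum_iff_isRoot_charpoly, Polynomial.IsRoot, Matrix.eval_charpoly,
    ← sub_eq_zero (a := z), ← mul_eq_zero]
  convert Iff.rfl using 2
  simp [Matrix.det_fin_three, Matrix.scalar_apply]
  ring

theorem re_neg_of_quadratic_eq_zero {b c : ℝ} (hb : 0 < b) (hc : 0 < c) {z : ℂ}
    (hz : z ^ 2 + b * z + c = 0) : z.re < 0 := by
  have hre := congrArg re hz
  have him := congrArg im hz
  simp only [pow_two, add_re, mul_re, add_im, mul_im, ofReal_re, ofReal_im, zero_re, zero_im,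
    zero_mul, sub_zero, add_zero] at hre him
  -- a non-real root has real part `-b / 2`; a real root cannot be nonnegative
  have him' : (2 * z.re + b) * z.im = 0 := by linear_combination him
  rcases mul_eq_zero.mp him' with h | h
  · linarith
  · by_contra! hx
    rw [h] at hre
    nlinarith

theorem exists_pos_quadratic_eq_zero (b : ℝ) {c : ℝ} (hc : c < 0) :
    ∃ x : ℝ, 0 < x ∧ x ^ 2 + b * x + c = 0 := by
  set s := √(discrim 1 b c)
  have hdiscrim : b ^ 2 < discrim 1 b c := by unfold discrim; linarith
  have hs : discrim 1 b c = s * s := (Real.mul_self_sqrt (by nlinarith [sq_nonneg b])).symm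
  refine ⟨(-b + s) / (2 * 1), ?_, ?_⟩
  · have : |b| < s := Real.lt_sqrt_of_sq_lt (by rwa [sq_abs])
    linarith [le_abs_self b]
  · simpa [pow_two] using (quadratic_eq_zero_iff one_ne_zero hs _).mpr (Or.inl rfl)

theorem leprosy_E0_linear_stability_general
    (ω β γ μ₁ δ α y μ₂ : ℝ)
    (hγ : 0 < γ) (hμ₁ : 0 < μ₁)
    (hδ : 0 < δ) (hy : 0 < y) (hμ₂ : 0 < μ₂)
    (R₀ : ℝ) (hR₀ : R₀ = α * β * ω / ((γ + μ₁) * (δ + μ₁) * (y + μ₂)))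
    (J₀ : Matrix (Fin 3) (Fin 3) ℝ)
    (hJ₀ : J₀ = !![-(γ + μ₁), 0, -(β * ω) / (γ + μ₁);
                   0, -(δ + μ₁), β * ω / (γ + μ₁);
                   0, α, -(y + μ₂)]) :
    (R₀ < 1 →
      ∀ z : ℂ, z ∈ spectrum ℂ (J₀.map (Complex.ofReal)) → z.re < 0) ∧
    (1 < R₀ →
      ∃ lam : ℝ, 0 < lam ∧ (lam : ℂ) ∈ spectrum ℂ (J₀.map (Complex.ofReal))) := by
  have hconst : (δ + μ₁) * (y + μ₂) * (1 - R₀) = (δ + μ₁) * (y + μ₂) - β * ω / (γ + μ₁) * α := by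
    rw [hR₀]; field_simp
  have hspec : ∀ z : ℂ, z ∈ spectrum ℂ (J₀.map ofReal) ↔ z = ↑(-(γ + μ₁)) ∨
      z ^ 2 + ↑((δ + μ₁) + (y + μ₂)) * z + ↑((δ + μ₁) * (y + μ₂) * (1 - R₀)) = 0 := by
    intro z
    rw [hJ₀, mem_spectrum_map_ofReal_iff, hconst]
    push_cast
    exact or_congr Iff.rfl ⟨fun h ↦ by linear_combination h, fun h ↦ by linear_combination h⟩
  refine ⟨fun hR z hz ↦ ?_, fun hR ↦ ?_⟩
  · rcases (hspec z).mp hz with rfl | hq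
    · simp only [ofReal_re]; linarith
    · exact re_neg_of_quadratic_eq_zero (by positivity) (mul_pos (by positivity) (by linarith)) hq
  · obtain ⟨x, hx, hq⟩ := exists_pos_quadratic_eq_zero ((δ + μ₁) + (y + μ₂))
      (c := (δ + μ₁) * (y + μ₂) * (1 - R₀)) (mul_neg_of_pos_of_neg (by positivity) (by linarith : 1 - R₀ < 0))
    exact ⟨x, hx, (hspec x).mpr (Or.inr (by exact_mod_cast hq))⟩

/-- Linear stability of the disease-free equilibrium: if `R₀ < 1`, every complex
eigenvalue of the Jacobian `J₀` has negative real part; if `R₀ > 1`, `J₀` has a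
positive real eigenvalue. -/
theorem leprosy_E0_linear_stability
    (ω β γ μ₁ δ α y μ₂ : ℝ)
    (hω : 0 < ω) (hβ : 0 < β) (hγ : 0 < γ) (hμ₁ : 0 < μ₁)
    (hδ : 0 < δ) (hα : 0 < α) (hy : 0 < y) (hμ₂ : 0 < μ₂)
    (R₀ : ℝ) (hR₀ : R₀ = α * β * ω / ((γ + μ₁) * (δ + μ₁) * (y + μ₂)))
    (J₀ : Matrix (Fin 3) (Fin 3) ℝ)
    (hJ₀ : J₀ = !![-(γ + μ₁), 0, -(β * ω) / (γ + μ₁);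
                   0, -(δ + μ₁), β * ω / (γ + μ₁);
                   0, α, -(y + μ₂)]) :
    (R₀ < 1 →
      ∀ z : ℂ, z ∈ spectrum ℂ (J₀.map (Complex.ofReal)) → z.re < 0) ∧
    (1 < R₀ →
      ∃ lam : ℝ, 0 < lam ∧ (lam : ℂ) ∈ spectrum ℂ (J₀.map (Complex.ofReal))) :=
  leprosy_E0_linear_stability_general ω β γ μ₁ δ α y μ₂ hγ hμ₁ hδ hy hμ₂ R₀ hR₀ J₀ hJ₀
end

section
/- With positive parameters and S₀ = ω/(γ+μ₁), define the Lyapunov function U(S, I, B) = S₀·(S/S₀ − ln(S/S₀)) + I + ((δ+μ₁)/α)·B for S > 0. For any real S > 0, I, B, the derivative of U along the vector field, namely (1 − S₀/S)·(ω − βSB − γS − μ₁S) + (βSB − δI − μ₁I) + ((δ+μ₁)/α)·(αI − yB − μ₂B), equals ω·(2 − S/S₀ − S₀/S) + ((δ+μ₁)(y+μ₂)/α)·(R₀ − 1)·B, where R₀ = αβω/((γ+μ₁)(δ+μ₁)(y+μ₂)). -/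
/-!
Since `ω = (γ + μ₁) S₀`, the `S`-equation contributes `-(γ + μ₁)(S - S₀)² / S`, which is
`ω (2 - S/S₀ - S₀/S)`. The weight `(δ + μ₁)/α` on `B` makes the `I`-terms cancel, and the
`B`-terms leave `β S₀ - (δ + μ₁)(y + μ₂)/α`, which is `(δ + μ₁)(y + μ₂)/α · (R₀ - 1)`.
-/

theorem one_sub_div_mul_sub_eq {K : Type*} [Field K] {S₀ S : K} (hS₀ : S₀ ≠ 0) (hS : S ≠ 0)
    (c : K) : (1 - S₀ / S) * (c * S₀ - c * S) = c * S₀ * (2 - S / S₀ - S₀ / S) := by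
  field_simp
  ring

theorem leprosy_lyapunov_derivative_identity_general
    (ω β γ μ₁ δ α y μ₂ : ℝ)
    (hω : 0 < ω) (hγ : 0 < γ) (hμ₁ : 0 < μ₁)
    (hδ : 0 < δ) (hα : 0 < α) (hy : 0 < y) (hμ₂ : 0 < μ₂)
    (S₀ : ℝ) (hS₀ : S₀ = ω / (γ + μ₁))
    (R₀ : ℝ) (hR₀ : R₀ = α * β * ω / ((γ + μ₁) * (δ + μ₁) * (y + μ₂))) :
    ∀ S I B : ℝ, 0 < S →
      (1 - S₀ / S) * (ω - β * S * B - γ * S - μ₁ * S) +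
        (β * S * B - δ * I - μ₁ * I) +
        ((δ + μ₁) / α) * (α * I - y * B - μ₂ * B) =
      ω * (2 - S / S₀ - S₀ / S) +
        ((δ + μ₁) * (y + μ₂) / α) * (R₀ - 1) * B := by
  intro S I B hS
  have hγμ₁ : γ + μ₁ ≠ 0 := by positivity
  have hδμ₁ : δ + μ₁ ≠ 0 := by positivity
  have hyμ₂ : y + μ₂ ≠ 0 := by positivity
  have hS₀_ne : S₀ ≠ 0 := by rw [hS₀]; positivity
  have hω_eq : ω = (γ + μ₁) * S₀ := by rw [hS₀, mul_div_cancel₀ _ hγμ₁]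
  have hR₀_coeff : (δ + μ₁) * (y + μ₂) / α * R₀ = β * S₀ := by
    rw [hR₀, hS₀]
    field_simp
  calc _ = (1 - S₀ / S) * ((γ + μ₁) * S₀ - (γ + μ₁) * S)
          + (β * S₀ - (δ + μ₁) * (y + μ₂) / α) * B := by
        rw [← hω_eq]
        field_simp
        ring
    _ = _ := by
        rw [one_sub_div_mul_sub_eq hS₀_ne hS.ne', ← hω_eq, ← hR₀_coeff]
        ring

/-- Derivative of the Lyapunov function `U` along the leprosy vector field:
for `S > 0`,
`(1 - S₀/S)·S' + I' + ((δ+μ₁)/α)·B' = ω(2 - S/S₀ - S₀/S) + ((δ+μ₁)(y+μ₂)/α)(R₀-1)B`. -/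
theorem leprosy_lyapunov_derivative_identity
    (ω β γ μ₁ δ α y μ₂ : ℝ)
    (hω : 0 < ω) (hβ : 0 < β) (hγ : 0 < γ) (hμ₁ : 0 < μ₁)
    (hδ : 0 < δ) (hα : 0 < α) (hy : 0 < y) (hμ₂ : 0 < μ₂)
    (S₀ : ℝ) (hS₀ : S₀ = ω / (γ + μ₁))
    (R₀ : ℝ) (hR₀ : R₀ = α * β * ω / ((γ + μ₁) * (δ + μ₁) * (y + μ₂))) :
    ∀ S I B : ℝ, 0 < S →
      (1 - S₀ / S) * (ω - β * S * B - γ * S - μ₁ * S) +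
        (β * S * B - δ * I - μ₁ * I) +
        ((δ + μ₁) / α) * (α * I - y * B - μ₂ * B) =
      ω * (2 - S / S₀ - S₀ / S) +
        ((δ + μ₁) * (y + μ₂) / α) * (R₀ - 1) * B :=
  leprosy_lyapunov_derivative_identity_general ω β γ μ₁ δ α y μ₂ hω hγ hμ₁ hδ hα hy hμ₂ S₀ hS₀ R₀
    hR₀
end

section
/- With positive parameters, S₀ = ω/(γ+μ₁), and R₀ = αβω/((γ+μ₁)(δ+μ₁)(y+μ₂)) ≤ 1: for every S > 0 and B ≥ 0, the quantity ω·(2 − S/S₀ − S₀/S) + ((δ+μ₁)(y+μ₂)/α)·(R₀ − 1)·B is ≤ 0, with equality only if S = S₀ and (R₀ − 1)·B = 0. Consequently, along any solution (S(t), I(t), B(t)) of the system with S(t) > 0 and B(t) ≥ 0, the function t ↦ U(S(t), I(t), B(t)), with U(S,I,B) = S₀(S/S₀ − ln(S/S₀)) + I + ((δ+μ₁)/α)B, is nonincreasing. -/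
/-!
`U` is a Volterra-type Lyapunov function. Along a solution, `ω = (γ + μ₁) S₀` and the choice
of the weight `(δ + μ₁)/α` on `B` make the `I`-terms and the `β S B`-terms cancel in `dU/dt`,
leaving `ω (2 - S/S₀ - S₀/S) + ((δ + μ₁)(y + μ₂)/α)(R₀ - 1) B`. The first summand is `≤ 0` by
AM-GM (`S/S₀ + S₀/S ≥ 2`), the second because `R₀ ≤ 1` and `B ≥ 0`.
-/

lemma two_sub_div_sub_div_eq {S S₀ : ℝ} (hS : S ≠ 0) (hS₀ : S₀ ≠ 0) :
    2 - S / S₀ - S₀ / S = -((S - S₀) ^ 2 / (S * S₀)) := by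
  field_simp
  ring

lemma two_sub_div_sub_div_nonpos {S S₀ : ℝ} (hS : 0 < S) (hS₀ : 0 < S₀) :
    2 - S / S₀ - S₀ / S ≤ 0 := by
  rw [two_sub_div_sub_div_eq hS.ne' hS₀.ne', neg_nonpos]
  positivity

lemma two_sub_div_sub_div_eq_zero_iff {S S₀ : ℝ} (hS : S ≠ 0) (hS₀ : S₀ ≠ 0) :
    2 - S / S₀ - S₀ / S = 0 ↔ S = S₀ := by
  rw [two_sub_div_sub_div_eq hS hS₀, neg_eq_zero, div_eq_zero_iff, sq_eq_zero_iff, sub_eq_zero]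
  exact or_iff_left (mul_ne_zero hS hS₀)

lemma lyapunov_rate_nonpos_and_eq_zero {a c R S S₀ B : ℝ} (ha : 0 < a) (hc : 0 < c)
    (hR : R ≤ 1) (hS : 0 < S) (hS₀ : 0 < S₀) (hB : 0 ≤ B) :
    a * (2 - S / S₀ - S₀ / S) + c * (R - 1) * B ≤ 0 ∧
      (a * (2 - S / S₀ - S₀ / S) + c * (R - 1) * B = 0 → S = S₀ ∧ (R - 1) * B = 0) := by
  have hSpart : a * (2 - S / S₀ - S₀ / S) ≤ 0 :=
    mul_nonpos_of_nonneg_of_nonpos ha.le (two_sub_div_sub_div_nonpos hS hS₀)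
  have hBpart : c * (R - 1) * B ≤ 0 :=
    mul_nonpos_of_nonpos_of_nonneg (mul_nonpos_of_nonneg_of_nonpos hc.le (by linarith)) hB
  refine ⟨add_nonpos hSpart hBpart, fun h => ?_⟩
  have hS0 : a * (2 - S / S₀ - S₀ / S) = 0 := by linarith
  have hB0 : c * ((R - 1) * B) = 0 := by linarith
  exact ⟨(two_sub_div_sub_div_eq_zero_iff hS.ne' hS₀.ne').1
      ((mul_eq_zero.1 hS0).resolve_left ha.ne'),
    (mul_eq_zero.1 hB0).resolve_left hc.ne'⟩

lemma HasDerivAt.volterra {f : ℝ → ℝ} {f' x₀ t : ℝ} (hf : HasDerivAt f f' t)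
    (hx₀ : x₀ ≠ 0) (hft : f t ≠ 0) :
    HasDerivAt (fun s => x₀ * (f s / x₀ - Real.log (f s / x₀))) (f' * (1 - x₀ / f t)) t := by
  have hquot := hf.div_const x₀
  refine ((hquot.sub (hquot.log (div_ne_zero hft hx₀))).const_mul x₀).congr_deriv ?_
  field_simp

lemma antitoneOn_of_hasDerivAt_nonpos {D : Set ℝ} (hD : Convex ℝ D) {f f' : ℝ → ℝ}
    (hf : ∀ x ∈ D, HasDerivAt f (f' x) x) (hf' : ∀ x ∈ D, f' x ≤ 0) : AntitoneOn f D :=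
  antitoneOn_of_deriv_nonpos hD (fun x hx => (hf x hx).continuousAt.continuousWithinAt)
    (fun x hx => (hf x (interior_subset hx)).differentiableAt.differentiableWithinAt)
    (fun x hx => (hf x (interior_subset hx)).deriv ▸ hf' x (interior_subset hx))

lemma leprosy_lyapunov_rate_eq {ω β γ μ₁ δ α y μ₂ S₀ R₀ S I B : ℝ}
    (hω : ω ≠ 0) (hγμ : γ + μ₁ ≠ 0) (hδμ : δ + μ₁ ≠ 0) (hα : α ≠ 0) (hyμ : y + μ₂ ≠ 0)
    (hS : S ≠ 0)
    (hS₀ : S₀ = ω / (γ + μ₁)) (hR₀ : R₀ = α * β * ω / ((γ + μ₁) * (δ + μ₁) * (y + μ₂))) :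
    (ω - β * S * B - γ * S - μ₁ * S) * (1 - S₀ / S) + (β * S * B - δ * I - μ₁ * I) +
        (δ + μ₁) / α * (α * I - y * B - μ₂ * B) =
      ω * (2 - S / S₀ - S₀ / S) + (δ + μ₁) * (y + μ₂) / α * (R₀ - 1) * B := by
  subst hS₀ hR₀
  field_simp
  ring

theorem leprosy_lyapunov_nonincreasing_general
    (ω β γ μ₁ δ α y μ₂ : ℝ)
    (hω : 0 < ω) (hγ : 0 < γ) (hμ₁ : 0 < μ₁)
    (hδ : 0 < δ) (hα : 0 < α) (hy : 0 < y) (hμ₂ : 0 < μ₂)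
    (S₀ : ℝ) (hS₀ : S₀ = ω / (γ + μ₁))
    (R₀ : ℝ) (hR₀ : R₀ = α * β * ω / ((γ + μ₁) * (δ + μ₁) * (y + μ₂)))
    (hR₀le : R₀ ≤ 1) :
    (∀ S B : ℝ, 0 < S → 0 ≤ B →
      (ω * (2 - S / S₀ - S₀ / S) +
        ((δ + μ₁) * (y + μ₂) / α) * (R₀ - 1) * B ≤ 0 ∧
       (ω * (2 - S / S₀ - S₀ / S) +
          ((δ + μ₁) * (y + μ₂) / α) * (R₀ - 1) * B = 0 →
        S = S₀ ∧ (R₀ - 1) * B = 0))) ∧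
    (∀ S I B : ℝ → ℝ,
      (∀ t ∈ Set.Ici (0 : ℝ),
        HasDerivAt S (ω - β * S t * B t - γ * S t - μ₁ * S t) t) →
      (∀ t ∈ Set.Ici (0 : ℝ),
        HasDerivAt I (β * S t * B t - δ * I t - μ₁ * I t) t) →
      (∀ t ∈ Set.Ici (0 : ℝ),
        HasDerivAt B (α * I t - y * B t - μ₂ * B t) t) →
      (∀ t ∈ Set.Ici (0 : ℝ), 0 < S t) →
      (∀ t ∈ Set.Ici (0 : ℝ), 0 ≤ B t) →
      AntitoneOn (fun t =>
        S₀ * (S t / S₀ - Real.log (S t / S₀)) + I t + ((δ + μ₁) / α) * B t)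
        (Set.Ici (0 : ℝ))) := by
  have hS₀pos : 0 < S₀ := hS₀ ▸ by positivity
  have rate_nonpos : ∀ S B : ℝ, 0 < S → 0 ≤ B → _ := fun S B hS hB =>
    lyapunov_rate_nonpos_and_eq_zero (c := (δ + μ₁) * (y + μ₂) / α) hω (by positivity) hR₀le
      hS hS₀pos hB
  refine ⟨rate_nonpos, fun S I B hS hI hB hSpos hBnn => ?_⟩
  refine antitoneOn_of_hasDerivAt_nonpos (convex_Ici 0) (fun t ht => ?_)
    (fun t ht => (rate_nonpos _ _ (hSpos t ht) (hBnn t ht)).1)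
  have hU := ((HasDerivAt.volterra (hS t ht) hS₀pos.ne' (hSpos t ht).ne').add (hI t ht)).add
    ((hB t ht).const_mul ((δ + μ₁) / α))
  rwa [leprosy_lyapunov_rate_eq hω.ne' (by positivity) (by positivity) hα.ne' (by positivity)
    (hSpos t ht).ne' hS₀ hR₀] at hU

/-- If `R₀ ≤ 1`, the Lyapunov derivative expression is nonpositive (with equality
only if `S = S₀` and `(R₀-1)B = 0`), and consequently `t ↦ U(S t, I t, B t)` is
nonincreasing along any solution with `S > 0` and `B ≥ 0`. -/
theorem leprosy_lyapunov_nonincreasing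
    (ω β γ μ₁ δ α y μ₂ : ℝ)
    (hω : 0 < ω) (hβ : 0 < β) (hγ : 0 < γ) (hμ₁ : 0 < μ₁)
    (hδ : 0 < δ) (hα : 0 < α) (hy : 0 < y) (hμ₂ : 0 < μ₂)
    (S₀ : ℝ) (hS₀ : S₀ = ω / (γ + μ₁))
    (R₀ : ℝ) (hR₀ : R₀ = α * β * ω / ((γ + μ₁) * (δ + μ₁) * (y + μ₂)))
    (hR₀le : R₀ ≤ 1) :
    (∀ S B : ℝ, 0 < S → 0 ≤ B →
      (ω * (2 - S / S₀ - S₀ / S) +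
        ((δ + μ₁) * (y + μ₂) / α) * (R₀ - 1) * B ≤ 0 ∧
       (ω * (2 - S / S₀ - S₀ / S) +
          ((δ + μ₁) * (y + μ₂) / α) * (R₀ - 1) * B = 0 →
        S = S₀ ∧ (R₀ - 1) * B = 0))) ∧
    (∀ S I B : ℝ → ℝ,
      (∀ t ∈ Set.Ici (0 : ℝ),
        HasDerivAt S (ω - β * S t * B t - γ * S t - μ₁ * S t) t) →
      (∀ t ∈ Set.Ici (0 : ℝ),
        HasDerivAt I (β * S t * B t - δ * I t - μ₁ * I t) t) →
      (∀ t ∈ Set.Ici (0 : ℝ),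
        HasDerivAt B (α * I t - y * B t - μ₂ * B t) t) →
      (∀ t ∈ Set.Ici (0 : ℝ), 0 < S t) →
      (∀ t ∈ Set.Ici (0 : ℝ), 0 ≤ B t) →
      AntitoneOn (fun t =>
        S₀ * (S t / S₀ - Real.log (S t / S₀)) + I t + ((δ + μ₁) / α) * B t)
        (Set.Ici (0 : ℝ))) :=
  leprosy_lyapunov_nonincreasing_general ω β γ μ₁ δ α y μ₂ hω hγ hμ₁ hδ hα hy hμ₂ S₀ hS₀ R₀ hR₀
    hR₀le
end

section
/- Let F and V be the 2×2 real matrices F = [[0, βω/(γ+μ₁)], [0, 0]] and V = [[δ+μ₁, 0], [−α, y+μ₂]], with all parameters positive. Then V is invertible, and the characteristic polynomial of the next-generation matrix F·V⁻¹ is X·(X − R₀) where R₀ = αβω/((γ+μ₁)(δ+μ₁)(y+μ₂)); hence the eigenvalues of F·V⁻¹ are 0 and R₀, and its spectral radius equals R₀. -/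
open Polynomial

/-! `V` is lower triangular with nonzero diagonal and `F` has a single nonzero entry, in its top
row, so `F V⁻¹` is upper triangular with diagonal `(R₀, 0)`. Its characteristic polynomial,
spectrum and spectral radius are then read off the diagonal. -/

namespace Matrix

variable {K : Type*} [Field K]

theorem inv_lowerTriangular_fin_two {a d : K} (c : K) (ha : a ≠ 0) (hd : d ≠ 0) :
    !![a, 0; c, d]⁻¹ = !![a⁻¹, 0; -c / (a * d), d⁻¹] := by
  refine inv_eq_right_inv ?_
  rw [mul_fin_two, one_fin_two]
  simp [field]

theorem charpoly_upperTriangular_fin_two {R : Type*} [CommRing R] [Nontrivial R] (a b d : R) :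
    !![a, b; 0, d].charpoly = (X - C a) * (X - C d) := by
  rw [charpoly_fin_two, trace_fin_two_of, det_fin_two_of]
  simp only [mul_zero, sub_zero, map_add, map_mul]
  ring

theorem spectrum_eq_pair_of_charpoly_eq {n : Type*} [Fintype n] [DecidableEq n]
    {A : Matrix n n K} {a b : K} (h : A.charpoly = (X - C a) * (X - C b)) :
    spectrum K A = {a, b} := by
  ext r
  simp [mem_spectrum_iff_isRoot_charpoly, h, sub_eq_zero]

end Matrix

theorem isGreatest_abs_image_pair_zero {G : Type*} [AddCommGroup G] [LinearOrder G]
    [IsOrderedAddMonoid G] {r : G} (hr : 0 ≤ r) :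
    IsGreatest ((fun x => |x|) '' {0, r}) r := by
  rw [Set.image_pair, abs_zero, abs_of_nonneg hr]
  simpa [max_eq_right hr] using isGreatest_pair (a := (0 : G)) (b := r)

/-- Next-generation matrix computation of `R₀`: `V` is invertible, the
characteristic polynomial of `F·V⁻¹` is `X (X - R₀)`, its spectrum is
`{0, R₀}`, and its spectral radius (largest eigenvalue in absolute value)
equals `R₀`. -/
theorem leprosy_next_generation_matrix
    (ω β γ μ₁ δ α y μ₂ : ℝ)
    (hω : 0 < ω) (hβ : 0 < β) (hγ : 0 < γ) (hμ₁ : 0 < μ₁)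
    (hδ : 0 < δ) (hα : 0 < α) (hy : 0 < y) (hμ₂ : 0 < μ₂)
    (R₀ : ℝ) (hR₀ : R₀ = α * β * ω / ((γ + μ₁) * (δ + μ₁) * (y + μ₂)))
    (F V : Matrix (Fin 2) (Fin 2) ℝ)
    (hF : F = !![0, β * ω / (γ + μ₁); 0, 0])
    (hV : V = !![δ + μ₁, 0; -α, y + μ₂]) :
    IsUnit V ∧
    (F * V⁻¹).charpoly = X * (X - C R₀) ∧
    spectrum ℝ (F * V⁻¹) = {0, R₀} ∧
    IsGreatest ((fun lam => |lam|) '' spectrum ℝ (F * V⁻¹)) R₀ := by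
  have hδμ₁ : δ + μ₁ ≠ 0 := by positivity
  have hyμ₂ : y + μ₂ ≠ 0 := by positivity
  have hNGM : F * V⁻¹ = !![R₀, β * ω / (γ + μ₁) / (y + μ₂); 0, 0] := by
    rw [hF, hV, Matrix.inv_lowerTriangular_fin_two _ hδμ₁ hyμ₂, Matrix.mul_fin_two, hR₀]
    congr 2 <;> simp [field]
  have hchar : (F * V⁻¹).charpoly = X * (X - C R₀) := by
    rw [hNGM, Matrix.charpoly_upperTriangular_fin_two, map_zero, sub_zero, mul_comm]
  have hspec : spectrum ℝ (F * V⁻¹) = {0, R₀} :=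
    Matrix.spectrum_eq_pair_of_charpoly_eq (by rw [hchar, map_zero, sub_zero])
  refine ⟨?_, hchar, hspec, ?_⟩
  · rw [hV, Matrix.isUnit_iff_isUnit_det, Matrix.det_fin_two_of, isUnit_iff_ne_zero, zero_mul,
      sub_zero]
    exact mul_ne_zero hδμ₁ hyμ₂
  · rw [hspec]
    exact isGreatest_abs_image_pair_zero (by rw [hR₀]; positivity)
end
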